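/- arXiv:2507.09401 — 3 statements merged into one kernel-verified Lean document; each statement's English description precedes it below -/
import Mathlib

section
/- Let w : ℝ → ℝ be (b−a)-periodic and square-integrable on [a,b], and s > 0. Then ∫_a^b (1/s)(w(x) − w(x−s)) w(x) dx = (1/2) ∫_a^b (1/s)(w(x+s) − w(x))² dx. -/
/-!
With `u = w x` and `v = w (x - s)`, write `(u - v) u = (u - v)² / 2 + (u² - v²) / 2`. Over one
period, `∫ (u² - v²) = 0` and `∫ (w x - w (x - s))² = ∫ (w (x + s) - w x)²`, both by translation
invariance of the integral of a `(b - a)`-periodic function. Square-integrability over one period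
extends to every interval by periodicity, which justifies splitting the integrals.
-/

open MeasureTheory

theorem Function.Periodic.intervalIntegral_comp_add_right_eq {E : Type*} [NormedAddCommGroup E]
    [NormedSpace ℝ E] {f : ℝ → E} {a b : ℝ} (hf : Function.Periodic f (b - a)) (s : ℝ) :
    ∫ x in a..b, f (x + s) = ∫ x in a..b, f x := by
  have := hf.intervalIntegral_add_eq (a + s) a
  rwa [add_right_comm, add_sub_cancel, ← intervalIntegral.integral_comp_add_right] at this

theorem Function.Periodic.intervalIntegrable_comp_sub_right {E : Type*} [NormedAddCommGroup E]
    {f : ℝ → E} {a b : ℝ} (hf : Function.Periodic f (b - a)) (hab : a ≠ b)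
    (hfi : IntervalIntegrable f volume a b) (s : ℝ) :
    IntervalIntegrable (fun x => f (x - s)) volume a b := by
  have := hf.intervalIntegrable (sub_ne_zero.2 hab.symm) (by rwa [add_sub_cancel]) (a - s) (b - s)
  simpa using this.comp_sub_right s

theorem IntervalIntegrable.sq_sub {u v : ℝ → ℝ} {a b : ℝ} (hu : AEStronglyMeasurable u volume)
    (hv : AEStronglyMeasurable v volume)
    (hu2 : IntervalIntegrable (fun x => u x ^ 2) volume a b)
    (hv2 : IntervalIntegrable (fun x => v x ^ 2) volume a b) :
    IntervalIntegrable (fun x => (u x - v x) ^ 2) volume a b := by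
  rw [intervalIntegrable_iff] at *
  have hu' := (memLp_two_iff_integrable_sq hu.restrict).2 hu2
  have hv' := (memLp_two_iff_integrable_sq hv.restrict).2 hv2
  exact (memLp_two_iff_integrable_sq (hu.restrict.sub hv.restrict)).1 (hu'.sub hv')

theorem stmt2_general (a b s : ℝ)
    (w : ℝ → ℝ) (hw : Function.Periodic w (b - a))
    (hwmeas : Measurable w)
    (hw2 : IntervalIntegrable (fun x => (w x) ^ 2) volume a b) :
    (∫ x in a..b, (1 / s) * (w x - w (x - s)) * w x)
      = (1 / 2) * ∫ x in a..b, (1 / s) * (w (x + s) - w x) ^ 2 := by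
  obtain rfl | hab := eq_or_ne a b
  · simp
  have hw2_shift : IntervalIntegrable (fun x => w (x - s) ^ 2) volume a b :=
    (hw.comp (· ^ 2)).intervalIntegrable_comp_sub_right hab hw2 s
  have hdiff : IntervalIntegrable (fun x => (w x - w (x - s)) ^ 2) volume a b :=
    IntervalIntegrable.sq_sub hwmeas.aestronglyMeasurable
      (hwmeas.comp (measurable_sub_const s)).aestronglyMeasurable hw2 hw2_shift
  have hw2_shift_eq : ∫ x in a..b, w (x - s) ^ 2 = ∫ x in a..b, w x ^ 2 := by
    simpa using (((hw.sub_const s).comp (· ^ 2)).intervalIntegral_comp_add_right_eq s).symm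
  have hdiff_shift_eq :
      ∫ x in a..b, (w x - w (x - s)) ^ 2 = ∫ x in a..b, (w (x + s) - w x) ^ 2 := by
    simpa using (((hw.sub (hw.sub_const s)).comp (· ^ 2)).intervalIntegral_comp_add_right_eq s).symm
  calc (∫ x in a..b, (1 / s) * (w x - w (x - s)) * w x)
      = ∫ x in a..b, (1 / (2 * s)) * (w x - w (x - s)) ^ 2
          + (1 / (2 * s)) * (w x ^ 2 - w (x - s) ^ 2) := by
        congr 1; ext x; ring
    _ = (1 / (2 * s)) * ∫ x in a..b, (w x - w (x - s)) ^ 2 := by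
        rw [intervalIntegral.integral_add (hdiff.const_mul _) ((hw2.sub hw2_shift).const_mul _),
          intervalIntegral.integral_const_mul, intervalIntegral.integral_const_mul,
          intervalIntegral.integral_sub hw2 hw2_shift, hw2_shift_eq]
        ring
    _ = (1 / 2) * ∫ x in a..b, (1 / s) * (w (x + s) - w x) ^ 2 := by
        rw [hdiff_shift_eq, intervalIntegral.integral_const_mul]
        ring

theorem stmt2 (a b s : ℝ) (hab : a < b) (hs : 0 < s)
    (w : ℝ → ℝ) (hw : Function.Periodic w (b - a))
    (hwmeas : Measurable w)
    (hw2 : IntervalIntegrable (fun x => (w x) ^ 2) volume a b) :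
    (∫ x in a..b, (1 / s) * (w x - w (x - s)) * w x)
      = (1 / 2) * ∫ x in a..b, (1 / s) * (w (x + s) - w x) ^ 2 :=
  stmt2_general a b s w hw hwmeas hw2
end

section
/- Let u, q : ℝ × [0,T] → ℝ with u(·,t) (b−a)-periodic and smooth in both variables, and let γ be a nonnegative kernel on (0,δ) with ∫_0^δ s²γ(s) ds < ∞. If for all t: (i) u_tt(x,t) = 2∫_0^δ s²γ(s)·(1/s)(q(x,t;s) − q(x−s,t;s)) ds and (ii) q(x,t;s) = (1/s)(u(x+s,t) − u(x,t)), then the energy E(t) = (1/2)∫_a^b u_t(x,t)² dx + ∫_0^δ s²γ(s) ∫_a^b q(x,t;s)² dx ds is constant in time: E(t) = E(0) for all t ∈ [0,T]. -/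
open MeasureTheory intervalIntegral
open scoped Interval

section helpers

lemma per_shift {P : ℝ} {f : ℝ → ℝ} (hf : ∀ x, f (x + P) = f x) (a : ℝ) (c : ℝ) :
    ∫ x in a..(a + P), f (x + c) = ∫ x in a..(a + P), f x := by
  have hper : Function.Periodic f P := hf
  have h1 : ∫ x in a..(a + P), f (x + c) = ∫ x in (a + c)..(a + P + c), f x := by
    simpa using (intervalIntegral.integral_comp_add_right (a := a) (b := a + P) (d := c) f).symm
  rw [h1]
  have := hper.intervalIntegral_add_eq (a + c) a
  have e : a + P + c = a + c + P := by ring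
  rw [e]; exact this

lemma per_shift' {a b : ℝ} {f : ℝ → ℝ} (hf : ∀ x, f (x + (b - a)) = f x) (c : ℝ) :
    ∫ x in a..b, f (x + c) = ∫ x in a..b, f x := by
  have e : b = a + (b - a) := by ring
  rw [e]; exact per_shift hf a c

lemma antisym {a b : ℝ} {v w : ℝ → ℝ} (hv : ∀ x, v (x + (b - a)) = v x)
    (hw : ∀ x, w (x + (b - a)) = w x)
    (hvc : Continuous v) (hwc : Continuous w) (s : ℝ) :
    ∫ x in a..b, (v (x + s) - v x) * w x
      = -∫ x in a..b, (w x - w (x - s)) * v x := by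
  have key : ∫ x in a..b, v (x + s) * w x = ∫ x in a..b, v x * w (x - s) := by
    have hg : ∀ x, (fun y => v (y + s) * w y) (x + (b - a)) = (fun y => v (y + s) * w y) x := by
      intro x; simp only []
      rw [add_right_comm, hv, hw]
    calc ∫ x in a..b, v (x + s) * w x
        = ∫ x in a..b, (fun y => v (y + s) * w y) (x + (-s)) := (per_shift' hg (-s)).symm
      _ = ∫ x in a..b, v x * w (x - s) := by
          congr 1; ext x; simp [sub_eq_add_neg, add_comm, add_left_comm, add_assoc]
  have i1 : IntervalIntegrable (fun x => v (x + s) * w x) volume a b :=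
    (((hvc.comp (continuous_add_right s)).mul hwc)).intervalIntegrable _ _
  have i2 : IntervalIntegrable (fun x => v x * w x) volume a b :=
    ((hvc.mul hwc)).intervalIntegrable _ _
  have i3 : IntervalIntegrable (fun x => v x * w (x - s)) volume a b :=
    ((hvc.mul (hwc.comp (continuous_sub_right s)))).intervalIntegrable _ _
  have lhs : ∫ x in a..b, (v (x + s) - v x) * w x
      = (∫ x in a..b, v (x + s) * w x) - ∫ x in a..b, v x * w x := by
    rw [← intervalIntegral.integral_sub i1 i2]; congr 1; ext x; ring
  have rhs : ∫ x in a..b, (w x - w (x - s)) * v x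
      = (∫ x in a..b, v x * w x) - ∫ x in a..b, v x * w (x - s) := by
    rw [← intervalIntegral.integral_sub i2 i3]; congr 1; ext x; ring
  rw [lhs, rhs, key]; ring

lemma partial_t (G : ℝ × ℝ → ℝ) (hG : ContDiff ℝ (⊤ : ℕ∞) G) (x t : ℝ) :
    HasDerivAt (fun τ => G (x, τ)) (fderiv ℝ G (x, t) (0, 1)) t := by
  have h1 : HasDerivAt (fun τ : ℝ => ((x, τ) : ℝ × ℝ)) ((0 : ℝ), (1 : ℝ)) t :=
    (hasDerivAt_const t x).prodMk (hasDerivAt_id t)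
  exact (((hG.differentiable (by simp)) (x, t)).hasFDerivAt).comp_hasDerivAt t h1

lemma partial_x (G : ℝ × ℝ → ℝ) (hG : ContDiff ℝ (⊤ : ℕ∞) G) (x t : ℝ) :
    HasDerivAt (fun y => G (y, t)) (fderiv ℝ G (x, t) (1, 0)) x := by
  have h1 : HasDerivAt (fun y : ℝ => ((y, t) : ℝ × ℝ)) ((1 : ℝ), (0 : ℝ)) x :=
    (hasDerivAt_id x).prodMk (hasDerivAt_const x t)
  exact (((hG.differentiable (by simp)) (x, t)).hasFDerivAt).comp_hasDerivAt x h1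

lemma fderiv_apply_smooth (G : ℝ × ℝ → ℝ) (hG : ContDiff ℝ (⊤ : ℕ∞) G) (d : ℝ × ℝ) :
    ContDiff ℝ (⊤ : ℕ∞) (fun p : ℝ × ℝ => fderiv ℝ G p d) :=
  (hG.fderiv_right (m := (⊤ : ℕ∞)) (by simp)).clm_apply contDiff_const

lemma lipx (G : ℝ × ℝ → ℝ) (hG : ContDiff ℝ (⊤ : ℕ∞) G) (lo hi t₁ t₂ : ℝ) :
    ∃ C, 0 ≤ C ∧ ∀ x₁ ∈ Set.Icc lo hi, ∀ x₂ ∈ Set.Icc lo hi, ∀ t ∈ Set.Icc t₁ t₂,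
      |G (x₁, t) - G (x₂, t)| ≤ C * |x₁ - x₂| := by
  set K : Set (ℝ × ℝ) := Set.Icc lo hi ×ˢ Set.Icc t₁ t₂ with hK
  have hKc : IsCompact K := isCompact_Icc.prod isCompact_Icc
  have hconv : Convex ℝ K := (convex_Icc lo hi).prod (convex_Icc t₁ t₂)
  have hcont : ContinuousOn (fun p => ‖fderiv ℝ G p‖) K :=
    ((hG.fderiv_right (m := (⊤ : ℕ∞)) (by simp)).continuous.norm).continuousOn
  obtain ⟨C, hC⟩ := hKc.exists_bound_of_continuousOn hcont
  refine ⟨max C 0, le_max_right _ _, ?_⟩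
  intro x₁ hx₁ x₂ hx₂ t ht
  have hb : ∀ p ∈ K, ‖fderiv ℝ G p‖ ≤ max C 0 := fun p hp =>
    le_trans (le_trans (le_abs_self _) (by simpa using hC p hp)) (le_max_left _ _)
  have := hconv.norm_image_sub_le_of_norm_fderiv_le
    (fun p _ => (hG.differentiable (by simp)).differentiableAt) hb
    (Set.mk_mem_prod hx₂ ht) (Set.mk_mem_prod hx₁ ht)
  have hnorm : ‖((x₁, t) : ℝ × ℝ) - (x₂, t)‖ = |x₁ - x₂| := by
    simp [Prod.norm_def, Real.norm_eq_abs]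
  calc |G (x₁, t) - G (x₂, t)| = ‖G (x₁, t) - G (x₂, t)‖ := rfl
    _ ≤ max C 0 * ‖((x₁, t) : ℝ × ℝ) - (x₂, t)‖ := this
    _ = max C 0 * |x₁ - x₂| := by rw [hnorm]

lemma mvt1 {f f' : ℝ → ℝ} {lo hi C : ℝ} (hf : ∀ x ∈ Set.Icc lo hi, HasDerivAt f (f' x) x)
    (hb : ∀ x ∈ Set.Icc lo hi, |f' x| ≤ C) {x y : ℝ} (hx : x ∈ Set.Icc lo hi)
    (hy : y ∈ Set.Icc lo hi) : |f y - f x| ≤ C * |y - x| := by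
  have := (convex_Icc lo hi).norm_image_sub_le_of_norm_hasDerivWithin_le
    (fun z hz => (hf z hz).hasDerivWithinAt) (fun z hz => by simpa using hb z hz) hx hy
  simpa [Real.norm_eq_abs] using this

lemma bd2 (G : ℝ × ℝ → ℝ) (hG : Continuous G) (lo hi t₁ t₂ : ℝ) :
    ∃ C, 0 ≤ C ∧ ∀ x ∈ Set.Icc lo hi, ∀ t ∈ Set.Icc t₁ t₂, |G (x, t)| ≤ C := by
  obtain ⟨C, hC⟩ := (isCompact_Icc.prod isCompact_Icc :
    IsCompact (Set.Icc lo hi ×ˢ Set.Icc t₁ t₂)).exists_bound_of_continuousOn hG.continuousOn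
  exact ⟨max C 0, le_max_right _ _, fun x hx t ht =>
    le_trans (by simpa using hC (x, t) (Set.mk_mem_prod hx ht)) (le_max_left _ _)⟩

end helpers

set_option maxHeartbeats 1000000 in
theorem stmt4 (a b δ T : ℝ) (hab : a < b) (hδ : 0 < δ) (hT : 0 < T)
    (u ut utt : ℝ → ℝ → ℝ) (q : ℝ → ℝ → ℝ → ℝ) (γ : ℝ → ℝ)
    (hper : ∀ t x, u (x + (b - a)) t = u x t)
    (husmooth : ContDiff ℝ (⊤ : ℕ∞) (fun p : ℝ × ℝ => u p.1 p.2))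
    (hut : ∀ x t, HasDerivAt (fun τ => u x τ) (ut x t) t)
    (hutt : ∀ x t, HasDerivAt (fun τ => ut x τ) (utt x t) t)
    (hγpos : ∀ s ∈ Set.Ioo (0:ℝ) δ, 0 ≤ γ s)
    (hγint : IntervalIntegrable (fun s => s ^ 2 * γ s) volume 0 δ)
    (heq1 : ∀ x t, utt x t
      = 2 * ∫ s in (0:ℝ)..δ, s ^ 2 * γ s * ((1 / s) * (q x t s - q (x - s) t s)))
    (heq2 : ∀ x t s, q x t s = (1 / s) * (u (x + s) t - u x t)) :
    ∀ t ∈ Set.Icc (0:ℝ) T,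
      ((1 / 2) * ∫ x in a..b, (ut x t) ^ 2)
          + (∫ s in (0:ℝ)..δ, s ^ 2 * γ s * ∫ x in a..b, (q x t s) ^ 2)
        = ((1 / 2) * ∫ x in a..b, (ut x 0) ^ 2)
          + (∫ s in (0:ℝ)..δ, s ^ 2 * γ s * ∫ x in a..b, (q x 0 s) ^ 2) := by
  -- setup
  set U : ℝ × ℝ → ℝ := fun p => u p.1 p.2 with hUdef
  have hU : ContDiff ℝ (⊤ : ℕ∞) U := husmooth
  set V : ℝ × ℝ → ℝ := fun p => fderiv ℝ U p (0, 1) with hVdef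
  have hV : ContDiff ℝ (⊤ : ℕ∞) V := fderiv_apply_smooth U hU _
  set W : ℝ × ℝ → ℝ := fun p => fderiv ℝ V p (0, 1) with hWdef
  have hW : ContDiff ℝ (⊤ : ℕ∞) W := fderiv_apply_smooth V hV _
  set UX : ℝ × ℝ → ℝ := fun p => fderiv ℝ U p (1, 0) with hUXdef
  have hUX : ContDiff ℝ (⊤ : ℕ∞) UX := fderiv_apply_smooth U hU _
  have hutV : ∀ x t, ut x t = V (x, t) := fun x t =>
    (hut x t).unique (partial_t U hU x t)
  have huttW : ∀ x t, utt x t = W (x, t) := by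
    intro x t
    have h1 : HasDerivAt (fun τ => V (x, τ)) (utt x t) t := by
      have := hutt x t
      have he : (fun τ => ut x τ) = fun τ => V (x, τ) := funext fun τ => hutV x τ
      rwa [he] at this
    exact h1.unique (partial_t V hV x t)
  have hux : ∀ y t, HasDerivAt (fun z => u z t) (UX (y, t)) y := fun y t =>
    partial_x U hU y t
  -- continuity
  have hUc : Continuous U := hU.continuous
  have hVc : Continuous V := hV.continuous
  have hWc : Continuous W := hW.continuous
  have hUXc : Continuous UX := hUX.continuous
  have hutc : ∀ t, Continuous fun x => ut x t := fun t =>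
    (hVc.comp (continuous_id.prodMk continuous_const)).congr fun x => (hutV x t).symm
  have huttc : ∀ t, Continuous fun x => utt x t := fun t =>
    (hWc.comp (continuous_id.prodMk continuous_const)).congr fun x => (huttW x t).symm
  have huc : ∀ t, Continuous fun x => u x t := fun t =>
    hUc.comp (continuous_id.prodMk continuous_const)
  have hqcx : ∀ t s, Continuous fun x => q x t s := by
    intro t s
    have : Continuous fun x => (1 / s) * (u (x + s) t - u x t) :=
      continuous_const.mul (((huc t).comp (continuous_add_right s)).sub (huc t))
    exact this.congr fun x => (heq2 x t s).symm
  -- periodicity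
  have hqper : ∀ t s x, q (x + (b - a)) t s = q x t s := by
    intro t s x
    rw [heq2, heq2, add_right_comm, hper, hper]
  have hutper : ∀ t x, ut (x + (b - a)) t = ut x t := by
    intro t x
    have h1 : HasDerivAt (fun τ => u x τ) (ut (x + (b - a)) t) t := by
      have := hut (x + (b - a)) t
      have he : (fun τ => u (x + (b - a)) τ) = fun τ => u x τ := funext fun τ => hper τ x
      rwa [he] at this
    exact h1.unique (hut x t)
  -- measurability of the kernel
  have hγio : IntegrableOn (fun s => s ^ 2 * γ s) (Set.Ioc 0 δ) volume := hγint.1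
  have hγm : AEStronglyMeasurable (fun s => s ^ 2 * γ s) (volume.restrict (Set.Ioc 0 δ)) :=
    hγio.aestronglyMeasurable
  -- reduce to zero derivative
  set E : ℝ → ℝ := fun τ =>
    ((1 / 2) * ∫ x in a..b, (ut x τ) ^ 2)
      + (∫ s in (0:ℝ)..δ, s ^ 2 * γ s * ∫ x in a..b, (q x τ s) ^ 2) with hEdef
  suffices hE : ∀ t₀ : ℝ, HasDerivAt E 0 t₀ by
    intro t _
    exact is_const_of_deriv_eq_zero (fun τ => (hE τ).differentiableAt)
      (fun τ => (hE τ).deriv) t 0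
  intro t₀
  -- constants
  obtain ⟨CU, hCU0, hCU⟩ := lipx U hU (a - δ) (b + δ) (t₀ - 2) (t₀ + 2)
  obtain ⟨CV, hCV0, hCV⟩ := lipx V hV (a - δ) (b + δ) (t₀ - 2) (t₀ + 2)
  obtain ⟨CX, hCX0, hCX⟩ := lipx UX hUX (a - δ) (b + δ) (t₀ - 2) (t₀ + 2)
  obtain ⟨BV, hBV0, hBV⟩ := bd2 V hVc a b (t₀ - 1) (t₀ + 1)
  obtain ⟨BW, hBW0, hBW⟩ := bd2 W hWc a b (t₀ - 1) (t₀ + 1)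
  have hIcc2 : Set.Icc (t₀ - 1 : ℝ) (t₀ + 1) ⊆ Set.Icc (t₀ - 2) (t₀ + 2) :=
    Set.Icc_subset_Icc (by linarith) (by linarith)
  have hmem1 : ∀ {x s : ℝ}, x ∈ Set.Icc a b → s ∈ Set.Ioc 0 δ →
      x ∈ Set.Icc (a - δ) (b + δ) ∧ x + s ∈ Set.Icc (a - δ) (b + δ)
        ∧ x - s ∈ Set.Icc (a - δ) (b + δ) := by
    intro x s hx hs
    obtain ⟨hx1, hx2⟩ := hx; obtain ⟨hs1, hs2⟩ := hs
    exact ⟨⟨by linarith, by linarith⟩, ⟨by linarith, by linarith⟩, ⟨by linarith, by linarith⟩⟩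
  -- pointwise bounds
  have hqb : ∀ s ∈ Set.Ioc (0:ℝ) δ, ∀ x ∈ Set.Icc a b, ∀ t ∈ Set.Icc (t₀ - 2) (t₀ + 2),
      |q x t s| ≤ CU := by
    intro s hs x hx t ht
    obtain ⟨hm1, hm2, _⟩ := hmem1 hx hs
    have h1 : |u (x + s) t - u x t| ≤ CU * |x + s - x| := hCU (x + s) hm2 x hm1 t ht
    rw [heq2, abs_mul, abs_div]
    have hsp := hs.1
    have h2 : |x + s - x| = s := by rw [add_sub_cancel_left, abs_of_pos hsp]
    rw [h2] at h1
    have : |1 / s| = 1 / s := abs_of_pos (by positivity)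
    rw [abs_one, abs_of_pos hsp]
    calc 1 / s * |u (x + s) t - u x t| ≤ 1 / s * (CU * s) := by
          apply mul_le_mul_of_nonneg_left h1 (by positivity)
      _ = CU := by field_simp
  have hqtb : ∀ s ∈ Set.Ioc (0:ℝ) δ, ∀ x ∈ Set.Icc a b, ∀ t ∈ Set.Icc (t₀ - 2) (t₀ + 2),
      |(1 / s) * (ut (x + s) t - ut x t)| ≤ CV := by
    intro s hs x hx t ht
    obtain ⟨hm1, hm2, _⟩ := hmem1 hx hs
    have h1 : |ut (x + s) t - ut x t| ≤ CV * |x + s - x| := by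
      rw [hutV, hutV]; exact hCV (x + s) hm2 x hm1 t ht
    have hsp := hs.1
    have h2 : |x + s - x| = s := by rw [add_sub_cancel_left, abs_of_pos hsp]
    rw [h2] at h1
    rw [abs_mul, abs_div, abs_one, abs_of_pos hsp]
    calc 1 / s * |ut (x + s) t - ut x t| ≤ 1 / s * (CV * s) := by
          apply mul_le_mul_of_nonneg_left h1 (by positivity)
      _ = CV := by field_simp
  -- second-difference bound
  have hddb : ∀ s ∈ Set.Ioc (0:ℝ) δ, ∀ x ∈ Set.Icc a b, ∀ t ∈ Set.Icc (t₀ - 2) (t₀ + 2),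
      |(1 / s) * (q x t s - q (x - s) t s)| ≤ CX := by
    intro s hs x hx t ht
    have hsp := hs.1
    set φ : ℝ → ℝ := fun y => u (y + s) t - u y t with hφdef
    have hφd : ∀ y ∈ Set.Icc (a - δ) b, HasDerivAt φ (UX (y + s, t) - UX (y, t)) y := by
      intro y _
      have h1 : HasDerivAt (fun z : ℝ => u (z + s) t) (UX (y + s, t)) y := by
        have h2 := (hux (y + s) t)
        have h3 : HasDerivAt (fun z : ℝ => z + s) 1 y := (hasDerivAt_id y).add_const s
        have h4 := h2.comp y h3; rw [mul_one] at h4; exact h4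
      exact h1.sub (hux y t)
    have hφb : ∀ y ∈ Set.Icc (a - δ) b, |UX (y + s, t) - UX (y, t)| ≤ CX * s := by
      intro y hy
      have hy1 : y ∈ Set.Icc (a - δ) (b + δ) := ⟨hy.1, by linarith [hy.2, hs.2, hδ.le]⟩
      have hy2 : y + s ∈ Set.Icc (a - δ) (b + δ) := ⟨by linarith [hy.1, hsp.le], by
        linarith [hy.2, hs.2]⟩
      have := hCX (y + s) hy2 y hy1 t ht
      have h2 : |y + s - y| = s := by rw [add_sub_cancel_left, abs_of_pos hsp]
      rwa [h2] at this
    have hx1 : x ∈ Set.Icc (a - δ) b := ⟨by linarith [hx.1, hδ.le], hx.2⟩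
    have hx2 : x - s ∈ Set.Icc (a - δ) b := ⟨by linarith [hx.1, hs.2], by linarith [hx.2, hsp]⟩
    have hmvt : |φ x - φ (x - s)| ≤ (CX * s) * |x - (x - s)| :=
      mvt1 hφd hφb hx2 hx1
    have h3 : |x - (x - s)| = s := by rw [sub_sub_cancel, abs_of_pos hsp]
    rw [h3] at hmvt
    have hkey : (1 / s) * (q x t s - q (x - s) t s) = (1 / s) * (1 / s) * (φ x - φ (x - s)) := by
      rw [heq2, heq2, hφdef]
      simp only [sub_add_cancel]
      ring
    rw [hkey]
    have h4 : |1 / s * (1 / s) * (φ x - φ (x - s))| = 1 / s * (1 / s) * |φ x - φ (x - s)| := by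
      rw [abs_mul, abs_mul, abs_of_pos (by positivity : (0:ℝ) < 1 / s)]
    rw [h4]
    calc 1 / s * (1 / s) * |φ x - φ (x - s)| ≤ 1 / s * (1 / s) * (CX * s * s) := by
          apply mul_le_mul_of_nonneg_left (le_trans hmvt (le_of_eq (by ring))) (by positivity)
      _ = CX := by field_simp
  -- membership helpers
  have hIoc_sub : Ι a b ⊆ Set.Icc a b := by
    rw [Set.uIoc_of_le hab.le]; exact Set.Ioc_subset_Icc_self
  have hIocδ : Ι (0:ℝ) δ = Set.Ioc 0 δ := Set.uIoc_of_le hδ.le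
  have hball1 : ∀ {t τ : ℝ}, τ ∈ Metric.ball t (1:ℝ) → τ ∈ Set.Icc (t - 1) (t + 1) := by
    intro t τ hτ
    have : |τ - t| < 1 := by simpa [Real.dist_eq] using hτ
    obtain ⟨h1, h2⟩ := abs_lt.mp this
    exact ⟨by linarith, by linarith⟩
  -- Part 1: derivative of kinetic term
  have hF : HasDerivAt (fun τ => ∫ x in a..b, ut x τ ^ 2)
      (∫ x in a..b, 2 * ut x t₀ * utt x t₀) t₀ := by
    refine (intervalIntegral.hasDerivAt_integral_of_dominated_loc_of_deriv_le
      (F := fun τ x => ut x τ ^ 2) (F' := fun τ x => 2 * ut x τ * utt x τ)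
      (bound := fun _ => 2 * BV * BW) (Metric.ball_mem_nhds _ one_pos) ?_ ?_ ?_ ?_ ?_ ?_).2
    · exact Filter.Eventually.of_forall fun τ => ((hutc τ).pow 2).aestronglyMeasurable
    · exact ((hutc t₀).pow 2).intervalIntegrable a b
    · exact ((continuous_const.mul (hutc t₀)).mul (huttc t₀)).aestronglyMeasurable
    · refine Filter.Eventually.of_forall fun x hx τ hτ => ?_
      have hx' : x ∈ Set.Icc a b := hIoc_sub hx
      have hτ' : τ ∈ Set.Icc (t₀ - 1) (t₀ + 1) := hball1 hτ
      have h1 : |ut x τ| ≤ BV := by rw [hutV]; exact hBV x hx' τ hτ'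
      have h2 : |utt x τ| ≤ BW := by rw [huttW]; exact hBW x hx' τ hτ'
      have : ‖2 * ut x τ * utt x τ‖ = 2 * |ut x τ| * |utt x τ| := by
        rw [Real.norm_eq_abs, abs_mul, abs_mul]; norm_num
      rw [this]
      have := mul_le_mul (mul_le_mul_of_nonneg_left h1 (by norm_num : (0:ℝ) ≤ 2)) h2
        (abs_nonneg _) (by positivity)
      exact this
    · exact intervalIntegrable_const
    · refine Filter.Eventually.of_forall fun x hx τ hτ => ?_
      have h := (hutt x τ).pow 2
      norm_num at h
      exact h
  -- Part 2: derivative of inner elastic integral (for fixed s)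
  have hH : ∀ s ∈ Set.Ioc (0:ℝ) δ, ∀ t ∈ Metric.ball t₀ (1:ℝ),
      HasDerivAt (fun τ => ∫ x in a..b, q x τ s ^ 2)
        (∫ x in a..b, 2 * q x t s * ((1 / s) * (ut (x + s) t - ut x t))) t := by
    intro s hs t htb
    have hsub : Set.Icc (t - 1) (t + 1) ⊆ Set.Icc (t₀ - 2) (t₀ + 2) := by
      have h0 : |t - t₀| < 1 := by simpa [Real.dist_eq] using htb
      obtain ⟨h1, h2⟩ := abs_lt.mp h0
      intro τ hτ; exact ⟨by linarith [hτ.1], by linarith [hτ.2]⟩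
    have hqtc : ∀ τ, Continuous fun x => 2 * q x τ s * ((1 / s) * (ut (x + s) τ - ut x τ)) :=
      fun τ => (continuous_const.mul (hqcx τ s)).mul
        (continuous_const.mul (((hutc τ).comp (continuous_add_right s)).sub (hutc τ)))
    refine (intervalIntegral.hasDerivAt_integral_of_dominated_loc_of_deriv_le
      (F := fun τ x => q x τ s ^ 2)
      (F' := fun τ x => 2 * q x τ s * ((1 / s) * (ut (x + s) τ - ut x τ)))
      (bound := fun _ => 2 * CU * CV) (Metric.ball_mem_nhds _ one_pos) ?_ ?_ ?_ ?_ ?_ ?_).2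
    · exact Filter.Eventually.of_forall fun τ => ((hqcx τ s).pow 2).aestronglyMeasurable
    · exact ((hqcx t s).pow 2).intervalIntegrable a b
    · exact (hqtc t).aestronglyMeasurable
    · refine Filter.Eventually.of_forall fun x hx τ hτ => ?_
      have hx' : x ∈ Set.Icc a b := hIoc_sub hx
      have hτ' : τ ∈ Set.Icc (t₀ - 2) (t₀ + 2) := hsub (hball1 hτ)
      have h1 : |q x τ s| ≤ CU := hqb s hs x hx' τ hτ'
      have h2 : |1 / s * (ut (x + s) τ - ut x τ)| ≤ CV := hqtb s hs x hx' τ hτ'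
      have h3 : ‖2 * q x τ s * (1 / s * (ut (x + s) τ - ut x τ))‖
          = 2 * |q x τ s| * |1 / s * (ut (x + s) τ - ut x τ)| := by
        rw [Real.norm_eq_abs, abs_mul, abs_mul]; norm_num
      rw [h3]
      have := mul_le_mul (mul_le_mul_of_nonneg_left h1 (by norm_num : (0:ℝ) ≤ 2)) h2
        (abs_nonneg _) (by positivity)
      exact this
    · exact intervalIntegrable_const
    · refine Filter.Eventually.of_forall fun x hx τ hτ => ?_
      have h1 : HasDerivAt (fun τ' => (1 / s) * (u (x + s) τ' - u x τ'))
          ((1 / s) * (ut (x + s) τ - ut x τ)) τ :=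
        ((hut (x + s) τ).sub (hut x τ)).const_mul (1 / s)
      have he : (fun τ' => q x τ' s) = fun τ' => (1 / s) * (u (x + s) τ' - u x τ') :=
        funext fun τ' => heq2 x τ' s
      have h2 : HasDerivAt (fun τ' => q x τ' s) ((1 / s) * (ut (x + s) τ - ut x τ)) τ := by
        rw [he]; exact h1
      have h3 := h2.pow 2
      norm_num at h3
      convert h3 using 1
      show 2 * q x τ s * (1 / s * (ut (x + s) τ - ut x τ)) = _
      rw [heq2 x τ s]; ring
      all_goals rfl
  -- Part 3: derivative of the elastic term
  set D : ℝ → ℝ → ℝ :=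
    fun t s => ∫ x in a..b, 2 * q x t s * ((1 / s) * (ut (x + s) t - ut x t)) with hDdef
  have hinv_meas : Measurable fun s : ℝ => (1 / s) ^ 2 :=
    (measurable_const.div measurable_id : Measurable fun s : ℝ => 1 / s).pow_const 2
  have hHt_eq : ∀ t s, (∫ x in a..b, q x t s ^ 2)
      = (1 / s) ^ 2 * ∫ x in a..b, (u (x + s) t - u x t) ^ 2 := by
    intro t s
    rw [← intervalIntegral.integral_const_mul]
    apply intervalIntegral.integral_congr
    intro x _
    show q x t s ^ 2 = (1 / s) ^ 2 * (u (x + s) t - u x t) ^ 2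
    rw [heq2]; ring
  have hΨc : ∀ t, Continuous fun s => ∫ x in a..b, (u (x + s) t - u x t) ^ 2 := by
    intro t
    apply intervalIntegral.continuous_parametric_intervalIntegral_of_continuous'
    exact ((((huc t).comp (continuous_snd.add continuous_fst)).sub
      ((huc t).comp continuous_snd)).pow 2)
  have hDt_eq : ∀ t s, D t s
      = (1 / s) ^ 2 * ∫ x in a..b, 2 * (u (x + s) t - u x t) * (ut (x + s) t - ut x t) := by
    intro t s
    rw [hDdef]
    rw [← intervalIntegral.integral_const_mul]
    apply intervalIntegral.integral_congr
    intro x _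
    show 2 * q x t s * ((1 / s) * (ut (x + s) t - ut x t))
      = (1 / s) ^ 2 * (2 * (u (x + s) t - u x t) * (ut (x + s) t - ut x t))
    rw [heq2]; ring
  have hΘc : ∀ t, Continuous fun s =>
      ∫ x in a..b, 2 * (u (x + s) t - u x t) * (ut (x + s) t - ut x t) := by
    intro t
    apply intervalIntegral.continuous_parametric_intervalIntegral_of_continuous'
    have hc1 : Continuous fun p : ℝ × ℝ => ut (p.2 + p.1) t :=
      (hVc.comp ((continuous_snd.add continuous_fst).prodMk continuous_const)).congr
        fun p => (hutV _ t).symm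
    have hc2 : Continuous fun p : ℝ × ℝ => ut p.2 t :=
      (hVc.comp (continuous_snd.prodMk continuous_const)).congr fun p => (hutV _ t).symm
    exact (continuous_const.mul (((huc t).comp (continuous_snd.add continuous_fst)).sub
      ((huc t).comp continuous_snd))).mul (hc1.sub hc2)
  have hΦm : ∀ t, AEStronglyMeasurable (fun s => s ^ 2 * γ s * ∫ x in a..b, q x t s ^ 2)
      (volume.restrict (Ι (0:ℝ) δ)) := by
    intro t
    rw [hIocδ]
    have he : (fun s => s ^ 2 * γ s * ∫ x in a..b, q x t s ^ 2)
        = fun s => s ^ 2 * γ s * ((1 / s) ^ 2 * ∫ x in a..b, (u (x + s) t - u x t) ^ 2) :=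
      funext fun s => by rw [hHt_eq]
    rw [he]
    exact hγm.mul ((hinv_meas.aestronglyMeasurable).mul (hΨc t).aestronglyMeasurable)
  have hDm : ∀ t, AEStronglyMeasurable (fun s => s ^ 2 * γ s * D t s)
      (volume.restrict (Ι (0:ℝ) δ)) := by
    intro t
    rw [hIocδ]
    have he : (fun s => s ^ 2 * γ s * D t s)
        = fun s => s ^ 2 * γ s * ((1 / s) ^ 2
            * ∫ x in a..b, 2 * (u (x + s) t - u x t) * (ut (x + s) t - ut x t)) :=
      funext fun s => by rw [hDt_eq]
    rw [he]
    exact hγm.mul ((hinv_meas.aestronglyMeasurable).mul (hΘc t).aestronglyMeasurable)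
  have habs : b - a = |b - a| := (abs_of_pos (by linarith)).symm
  have hgkey := intervalIntegral.hasDerivAt_integral_of_dominated_loc_of_deriv_le
      (F := fun τ s => s ^ 2 * γ s * ∫ x in a..b, q x τ s ^ 2)
      (F' := fun τ s => s ^ 2 * γ s * D τ s)
      (bound := fun s => |s ^ 2 * γ s| * (2 * CU * CV * (b - a))) (x₀ := t₀)
      (Metric.ball_mem_nhds _ one_pos) (Filter.Eventually.of_forall fun τ => hΦm τ) ?_ (hDm t₀) ?_ ?_ ?_
  rotate_left
  · -- integrability of F t₀
    rw [intervalIntegrable_iff, hIocδ]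
    apply Integrable.mono' ((hγio.abs).mul_const (CU ^ 2 * (b - a)))
      ((hIocδ ▸ hΦm t₀ : AEStronglyMeasurable _ (volume.restrict (Set.Ioc 0 δ))))
    refine (ae_restrict_iff' measurableSet_Ioc).mpr (Filter.Eventually.of_forall fun s hs => ?_)
    have hb1 : ∀ x ∈ Ι a b, ‖q x t₀ s ^ 2‖ ≤ CU ^ 2 := by
      intro x hx
      have h1 : |q x t₀ s| ≤ CU := hqb s hs x (hIoc_sub hx) t₀ ⟨by linarith, by linarith⟩
      rw [Real.norm_eq_abs, abs_pow]
      exact pow_le_pow_left₀ (abs_nonneg _) h1 2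
    have h2 := intervalIntegral.norm_integral_le_of_norm_le_const hb1
    rw [Real.norm_eq_abs, abs_mul]
    refine mul_le_mul_of_nonneg_left ?_ (abs_nonneg _)
    rw [Real.norm_eq_abs] at h2
    calc |∫ x in a..b, q x t₀ s ^ 2| ≤ CU ^ 2 * |b - a| := h2
      _ = CU ^ 2 * (b - a) := by rw [← habs]
  · -- uniform bound on F'
    refine Filter.Eventually.of_forall fun s hs τ hτ => ?_
    have hs' : s ∈ Set.Ioc 0 δ := hIocδ ▸ hs
    have hτ' : τ ∈ Set.Icc (t₀ - 2) (t₀ + 2) := hIcc2 (hball1 hτ)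
    have hb1 : ∀ x ∈ Ι a b, ‖2 * q x τ s * ((1 / s) * (ut (x + s) τ - ut x τ))‖ ≤ 2 * CU * CV := by
      intro x hx
      have h1 : |q x τ s| ≤ CU := hqb s hs' x (hIoc_sub hx) τ hτ'
      have h2 : |1 / s * (ut (x + s) τ - ut x τ)| ≤ CV := hqtb s hs' x (hIoc_sub hx) τ hτ'
      have h3 : ‖2 * q x τ s * (1 / s * (ut (x + s) τ - ut x τ))‖
          = 2 * |q x τ s| * |1 / s * (ut (x + s) τ - ut x τ)| := by
        rw [Real.norm_eq_abs, abs_mul, abs_mul]; norm_num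
      rw [h3]
      exact mul_le_mul (mul_le_mul_of_nonneg_left h1 (by norm_num : (0:ℝ) ≤ 2)) h2
        (abs_nonneg _) (by positivity)
    have h2 := intervalIntegral.norm_integral_le_of_norm_le_const hb1
    rw [Real.norm_eq_abs, abs_mul]
    refine mul_le_mul_of_nonneg_left ?_ (abs_nonneg _)
    rw [Real.norm_eq_abs] at h2
    calc |D τ s| ≤ 2 * CU * CV * |b - a| := h2
      _ = 2 * CU * CV * (b - a) := by rw [← habs]
  · exact (hγint.abs).mul_const _
  · refine Filter.Eventually.of_forall fun s hs τ hτ => ?_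
    exact (hH s (hIocδ ▸ hs) τ hτ).const_mul (s ^ 2 * γ s)
  obtain ⟨hDint, hG⟩ := hgkey
  -- combine
  have hE' : HasDerivAt E
      ((1 / 2) * (∫ x in a..b, 2 * ut x t₀ * utt x t₀) + ∫ s in (0:ℝ)..δ, s ^ 2 * γ s * D t₀ s)
      t₀ := (hF.const_mul (1 / 2)).add hG
  suffices hzero : (1 / 2) * (∫ x in a..b, 2 * ut x t₀ * utt x t₀)
      + (∫ s in (0:ℝ)..δ, s ^ 2 * γ s * D t₀ s) = 0 by
    rw [hzero] at hE'; exact hE'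
  -- final algebra
  clear hE' hF hG hH hΦm hDm hΘc hΨc hHt_eq
  set F2 : ℝ → ℝ → ℝ :=
    fun x s => (2 * ut x t₀) * (s ^ 2 * γ s * ((1 / s) * (q x t₀ s - q (x - s) t₀ s)))
    with hF2def
  have h0 : ∫ x in a..b, 2 * ut x t₀ * utt x t₀
      = 2 * ∫ x in a..b, ut x t₀ * utt x t₀ := by
    rw [← intervalIntegral.integral_const_mul]
    apply intervalIntegral.integral_congr
    intro x _; dsimp only; ring
  have h1 : ∀ x, ut x t₀ * utt x t₀ = ∫ s in (0:ℝ)..δ, F2 x s := by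
    intro x
    rw [hF2def]
    dsimp only
    rw [heq1, intervalIntegral.integral_const_mul]
    ring
  -- Fubini
  have finμ : IsFiniteMeasure (volume.restrict (Set.Ioc a b)) :=
    ⟨by rw [Measure.restrict_apply_univ]; exact measure_Ioc_lt_top⟩
  have hFub : Integrable (Function.uncurry F2)
      ((volume.restrict (Set.Ioc a b)).prod (volume.restrict (Set.Ioc 0 δ))) := by
    have hg : Integrable (fun p : ℝ × ℝ => (2 * BV * CX) * |p.2 ^ 2 * γ p.2|)
        ((volume.restrict (Set.Ioc a b)).prod (volume.restrict (Set.Ioc 0 δ))) :=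
      (integrable_const (2 * BV * CX)).mul_prod hγio.abs
    have hmeas : AEStronglyMeasurable (Function.uncurry F2)
        ((volume.restrict (Set.Ioc a b)).prod (volume.restrict (Set.Ioc 0 δ))) := by
      have he : Function.uncurry F2 = fun p : ℝ × ℝ =>
          (2 * ut p.1 t₀) * ((p.2 ^ 2 * γ p.2) * ((1 / p.2) ^ 2
            * ((u (p.1 + p.2) t₀ - u p.1 t₀) - (u p.1 t₀ - u (p.1 - p.2) t₀)))) := by
        funext p
        show F2 p.1 p.2 = _
        rw [hF2def]
        dsimp only
        rw [heq2 p.1 t₀ p.2, heq2 (p.1 - p.2) t₀ p.2,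
          show p.1 - p.2 + p.2 = p.1 from by ring]
        ring
      rw [he]
      have c1 : Continuous fun p : ℝ × ℝ => 2 * ut p.1 t₀ :=
        continuous_const.mul ((hutc t₀).comp continuous_fst)
      have c4 : Continuous fun p : ℝ × ℝ =>
          (u (p.1 + p.2) t₀ - u p.1 t₀) - (u p.1 t₀ - u (p.1 - p.2) t₀) :=
        (((huc t₀).comp (continuous_fst.add continuous_snd)).sub
          ((huc t₀).comp continuous_fst)).sub
          (((huc t₀).comp continuous_fst).sub ((huc t₀).comp (continuous_fst.sub continuous_snd)))
      exact c1.aestronglyMeasurable.mul (hγm.comp_snd.mul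
        (((hinv_meas.comp measurable_snd).aestronglyMeasurable).mul c4.aestronglyMeasurable))
    apply Integrable.mono' hg hmeas
    rw [Measure.prod_restrict]
    refine (ae_restrict_iff' (measurableSet_Ioc.prod measurableSet_Ioc)).mpr
      (Filter.Eventually.of_forall fun p hp => ?_)
    obtain ⟨hp1, hp2⟩ := hp
    have hx' : p.1 ∈ Set.Icc a b := Set.Ioc_subset_Icc_self hp1
    have h1b : |ut p.1 t₀| ≤ BV := by
      rw [hutV]; exact hBV p.1 hx' t₀ ⟨by linarith, by linarith⟩
    have h2b : |(1 / p.2) * (q p.1 t₀ p.2 - q (p.1 - p.2) t₀ p.2)| ≤ CX :=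
      hddb p.2 hp2 p.1 hx' t₀ ⟨by linarith, by linarith⟩
    show ‖F2 p.1 p.2‖ ≤ _
    rw [hF2def]
    dsimp only
    rw [Real.norm_eq_abs, abs_mul, abs_mul, abs_mul]
    have e2 : |(2:ℝ)| * |ut p.1 t₀| ≤ 2 * BV := by
      rw [abs_two]; linarith
    calc |(2:ℝ)| * |ut p.1 t₀| * (|p.2 ^ 2 * γ p.2|
           * |1 / p.2 * (q p.1 t₀ p.2 - q (p.1 - p.2) t₀ p.2)|)
        ≤ (2 * BV) * (|p.2 ^ 2 * γ p.2| * CX) := by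
          apply mul_le_mul e2 (mul_le_mul_of_nonneg_left h2b (abs_nonneg _))
            (by positivity) (by positivity)
      _ = 2 * BV * CX * |p.2 ^ 2 * γ p.2| := by ring
  have hswap : ∫ x in Set.Ioc a b, (∫ s in Set.Ioc (0:ℝ) δ, F2 x s)
      = ∫ s in Set.Ioc (0:ℝ) δ, (∫ x in Set.Ioc a b, F2 x s) :=
    integral_integral_swap hFub
  have hA : ∫ x in a..b, ut x t₀ * utt x t₀
      = ∫ s in (0:ℝ)..δ, ∫ x in a..b, F2 x s := by
    calc ∫ x in a..b, ut x t₀ * utt x t₀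
        = ∫ x in a..b, (∫ s in (0:ℝ)..δ, F2 x s) := by
          apply intervalIntegral.integral_congr
          intro x _; dsimp only; exact h1 x
      _ = ∫ x in Set.Ioc a b, (∫ s in (0:ℝ)..δ, F2 x s) :=
          intervalIntegral.integral_of_le hab.le
      _ = ∫ x in Set.Ioc a b, (∫ s in Set.Ioc (0:ℝ) δ, F2 x s) := by
          simp only [intervalIntegral.integral_of_le hδ.le]
      _ = ∫ s in Set.Ioc (0:ℝ) δ, (∫ x in Set.Ioc a b, F2 x s) := hswap
      _ = ∫ s in Set.Ioc (0:ℝ) δ, (∫ x in a..b, F2 x s) := by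
          simp only [intervalIntegral.integral_of_le hab.le]
      _ = ∫ s in (0:ℝ)..δ, ∫ x in a..b, F2 x s :=
          (intervalIntegral.integral_of_le hδ.le).symm
  have h2 : ∀ s : ℝ, (∫ x in a..b, F2 x s) = -(s ^ 2 * γ s * D t₀ s) := by
    intro s
    have e1 : ∫ x in a..b, F2 x s
        = (2 * (s ^ 2 * γ s) * (1 / s))
            * ∫ x in a..b, (q x t₀ s - q (x - s) t₀ s) * ut x t₀ := by
      rw [← intervalIntegral.integral_const_mul]
      apply intervalIntegral.integral_congr
      intro x _
      show F2 x s = _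
      rw [hF2def]; dsimp only; ring
    have e2 : ∫ x in a..b, (q x t₀ s - q (x - s) t₀ s) * ut x t₀
        = -∫ x in a..b, (ut (x + s) t₀ - ut x t₀) * q x t₀ s := by
      have h := antisym (a := a) (b := b) (v := fun x => ut x t₀) (w := fun x => q x t₀ s)
        (fun x => hutper t₀ x) (fun x => hqper t₀ s x) (hutc t₀) (hqcx t₀ s) s
      linarith [h]
    have e3 : D t₀ s = (2 * (1 / s)) * ∫ x in a..b, (ut (x + s) t₀ - ut x t₀) * q x t₀ s := by
      rw [hDdef]
      dsimp only
      rw [← intervalIntegral.integral_const_mul]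
      apply intervalIntegral.integral_congr
      intro x _; dsimp only; ring
    rw [e1, e2, e3]; ring
  have h3 : ∫ s in (0:ℝ)..δ, (∫ x in a..b, F2 x s)
      = ∫ s in (0:ℝ)..δ, -(s ^ 2 * γ s * D t₀ s) := by
    apply intervalIntegral.integral_congr
    intro s _; dsimp only; exact h2 s
  rw [h0, hA, h3, intervalIntegral.integral_neg]
  ring
end

section
/- For a twice continuously differentiable (b−a)-periodic function u and an even kernel γ ≥ 0 on (−δ,δ) with ∫_{−δ}^δ s²γ(s) ds = 1 and ∫_{−δ}^δ s⁴γ(s) ds < ∞, the nonlocal operator satisfies |−2∫_0^δ (u(x+s) − 2u(x) + u(x−s)) γ(s) ds + u''(x)| ≤ (1/12) ‖u''''‖_∞ ∫_{−δ}^δ s⁴γ(s) ds for all x, provided u is C⁴. -/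
/-!
Taylor's theorem with Lagrange remainder at `x + s` and at `x - s` makes the odd-order terms
cancel, so `R s := u (x + s) - 2 u x + u (x - s) - s² u'' x` satisfies `|R s| ≤ M s⁴ / 12`.
Since `γ` is only known to be integrable against `s²` and `s⁴`, the integrand is split as
`u'' x · s² γ s + (R s / s⁴) · s⁴ γ s` with a bounded measurable factor `R s / s⁴`.
By evenness of `γ` the normalisation gives `∫₀^δ s² γ = 1/2`, so the `u''` terms cancel,
leaving `2 |∫₀^δ (R s / s⁴) s⁴ γ s| ≤ (M / 6) ∫₀^δ s⁴ γ = (M / 12) ∫_{-δ}^δ s⁴ γ`.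
-/

open MeasureTheory Set Nat intervalIntegral

theorem taylorWithinEval_uIcc_eq_sum {f : ℝ → ℝ} {n : ℕ} (hf : ContDiff ℝ n f) {x₀ x : ℝ}
    (hx : x₀ ≠ x) :
    taylorWithinEval f n (uIcc x₀ x) x₀ x =
      ∑ k ∈ Finset.range (n + 1), iteratedDeriv k f x₀ * (x - x₀) ^ k / k ! := by
  rw [taylor_within_apply]
  refine Finset.sum_congr rfl fun k hk => ?_
  have hkn : (k : WithTop ℕ∞) ≤ n := by exact_mod_cast Nat.lt_succ_iff.mp (Finset.mem_range.mp hk)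
  rw [iteratedDerivWithin_eq_iteratedDeriv (uniqueDiffOn_uIcc hx) (hf.contDiffAt.of_le hkn)
    left_mem_uIcc, smul_eq_mul]
  ring

theorem abs_sub_taylor_sum_le {f : ℝ → ℝ} {n : ℕ} {M : ℝ} (hf : ContDiff ℝ (n + 1) f)
    (hM : ∀ y, |iteratedDeriv (n + 1) f y| ≤ M) (x₀ h : ℝ) :
    |f (x₀ + h) - ∑ k ∈ Finset.range (n + 1), iteratedDeriv k f x₀ * h ^ k / k !|
      ≤ M * |h| ^ (n + 1) / (n + 1)! := by
  rcases eq_or_ne h 0 with rfl | hh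
  · simp [Finset.sum_range_succ']
  obtain ⟨y, -, hy⟩ := taylor_mean_remainder_lagrange_iteratedDeriv
    (x₀ := x₀) (x := x₀ + h) (by simpa using hh) hf.contDiffOn
  rw [taylorWithinEval_uIcc_eq_sum hf.of_succ (by simpa using hh), add_sub_cancel_left] at hy
  rw [hy, abs_div, abs_mul, abs_pow, Nat.abs_cast]
  gcongr
  exact hM y

theorem abs_symmetric_second_difference_sub_le {u : ℝ → ℝ} {M : ℝ} (hu : ContDiff ℝ 4 u)
    (hM : ∀ y, |iteratedDeriv 4 u y| ≤ M) (x s : ℝ) :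
    |u (x + s) - 2 * u x + u (x - s) - s ^ 2 * iteratedDeriv 2 u x| ≤ M / 12 * s ^ 4 := by
  have hfwd := abs_sub_taylor_sum_le (n := 3) hu hM x s
  have hbwd := abs_sub_taylor_sum_le (n := 3) hu hM x (-s)
  simp only [Finset.sum_range_succ, Finset.sum_range_zero] at hfwd hbwd
  norm_num [← sub_eq_add_neg, Even.pow_abs (show Even 4 by decide)] at hfwd hbwd
  rw [abs_le] at hfwd hbwd ⊢
  constructor <;> linarith [hfwd.1, hfwd.2, hbwd.1, hbwd.2]

-- at `s = 0` the quotient is the junk value `0 / 0 = 0`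
theorem abs_symmetric_second_difference_sub_div_le {u : ℝ → ℝ} {M : ℝ} (hu : ContDiff ℝ 4 u)
    (hM : ∀ y, |iteratedDeriv 4 u y| ≤ M) (x s : ℝ) :
    |(u (x + s) - 2 * u x + u (x - s) - s ^ 2 * iteratedDeriv 2 u x) / s ^ 4| ≤ M / 12 := by
  rcases eq_or_ne s 0 with rfl | hs
  · simpa using div_nonneg ((abs_nonneg _).trans (hM 0)) (by norm_num : (0:ℝ) ≤ 12)
  · rw [abs_div, abs_of_nonneg (by positivity : (0:ℝ) ≤ s ^ 4), div_le_iff₀ (by positivity)]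
    exact abs_symmetric_second_difference_sub_le hu hM x s

theorem intervalIntegral.integral_neg_self_eq_two_nsmul_of_even {E : Type*}
    [NormedAddCommGroup E] [NormedSpace ℝ E] {f : ℝ → E} {a : ℝ} (hf : ∀ s, f (-s) = f s)
    (hfi : IntervalIntegrable f volume (-a) a) :
    ∫ s in (-a)..a, f s = 2 • ∫ s in (0:ℝ)..a, f s := by
  have hleft : ∫ s in (-a)..0, f s = ∫ s in (0:ℝ)..a, f s := by
    simpa only [hf, neg_zero] using (integral_comp_neg (a := 0) (b := a) f).symm
  have hzero : (0:ℝ) ∈ uIcc (-a) a := by simpa [Set.mem_uIcc] using le_total 0 a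
  rw [← integral_add_adjacent_intervals (b := 0)
    (hfi.mono_set (uIcc_subset_uIcc left_mem_uIcc hzero))
    (hfi.mono_set (uIcc_subset_uIcc hzero right_mem_uIcc)), hleft, two_nsmul]

theorem IntervalIntegrable.bdd_mul {f g : ℝ → ℝ} {μ : Measure ℝ} {a b c : ℝ}
    (hg : IntervalIntegrable g μ a b) (hf : AEStronglyMeasurable f μ) (hf_bound : ∀ s, ‖f s‖ ≤ c) :
    IntervalIntegrable (fun s => f s * g s) μ a b :=
  ⟨hg.1.bdd_mul hf.restrict (ae_of_all _ hf_bound),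
    hg.2.bdd_mul hf.restrict (ae_of_all _ hf_bound)⟩

theorem abs_integral_mul_le_of_abs_le {f g : ℝ → ℝ} {a b c : ℝ} (hab : a ≤ b)
    (hf_bound : ∀ s, |f s| ≤ c) (hg : IntervalIntegrable g volume a b)
    (hg_nonneg : ∀ s ∈ Ioo a b, 0 ≤ g s) :
    |∫ s in a..b, f s * g s| ≤ c * ∫ s in a..b, g s := by
  rw [← Real.norm_eq_abs, ← intervalIntegral.integral_const_mul]
  refine norm_integral_le_of_norm_le hab ?_ (hg.const_mul c)
  filter_upwards [volume.ae_ne b] with s hsb hs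
  have hgs : 0 ≤ g s := hg_nonneg s ⟨hs.1, lt_of_le_of_ne hs.2 hsb⟩
  rw [norm_mul, Real.norm_of_nonneg hgs, Real.norm_eq_abs]
  exact mul_le_mul_of_nonneg_right (hf_bound s) hgs

theorem stmt14_general (δ M : ℝ) (hδ : 0 < δ)
    (u γ : ℝ → ℝ)
    (huC4 : ContDiff ℝ 4 u)
    (hγeven : ∀ s, γ (-s) = γ s)
    (hγpos : ∀ s ∈ Set.Ioo (-δ) δ, 0 ≤ γ s)
    (hnorm : (∫ s in (-δ)..δ, s ^ 2 * γ s) = 1)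
    (hfourth : IntervalIntegrable (fun s => s ^ 4 * γ s) volume (-δ) δ)
    (hM : ∀ y, |iteratedDeriv 4 u y| ≤ M) :
    ∀ x : ℝ,
      |(-2) * (∫ s in (0:ℝ)..δ, (u (x + s) - 2 * u x + u (x - s)) * γ s)
          + iteratedDeriv 2 u x|
        ≤ (1 / 12) * M * ∫ s in (-δ)..δ, s ^ 4 * γ s := by
  intro x
  set R : ℝ → ℝ := fun s => u (x + s) - 2 * u x + u (x - s) - s ^ 2 * iteratedDeriv 2 u x
  have hquot : ∀ s, |R s / s ^ 4| ≤ M / 12 := abs_symmetric_second_difference_sub_div_le huC4 hM x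
  have hquot_meas : Measurable fun s => R s / s ^ 4 := by
    have := huC4.continuous
    fun_prop
  have h0δ : uIcc 0 δ ⊆ uIcc (-δ) δ := uIcc_subset_uIcc (by simp [hδ.le]) right_mem_uIcc
  have hsecond_int : IntervalIntegrable (fun s => s ^ 2 * γ s) volume (-δ) δ :=
    intervalIntegrable_of_integral_ne_zero (by rw [hnorm]; exact one_ne_zero)
  have hsplit : ∫ s in (0:ℝ)..δ, (u (x + s) - 2 * u x + u (x - s)) * γ s
      = iteratedDeriv 2 u x * (∫ s in (0:ℝ)..δ, s ^ 2 * γ s)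
        + ∫ s in (0:ℝ)..δ, R s / s ^ 4 * (s ^ 4 * γ s) := by
    rw [← intervalIntegral.integral_const_mul, ← integral_add
      ((hsecond_int.mono_set h0δ).const_mul _) ((hfourth.mono_set h0δ).bdd_mul
        hquot_meas.aestronglyMeasurable hquot)]
    refine integral_congr_ae ?_
    filter_upwards [volume.ae_ne 0] with s hs _
    field_simp
    ring
  have hsecond : ∫ s in (0:ℝ)..δ, s ^ 2 * γ s = 1 / 2 := by
    have := integral_neg_self_eq_two_nsmul_of_even (fun s => by simp only [hγeven]; ring)
      hsecond_int
    rw [hnorm, two_nsmul] at this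
    linarith
  have hfourth_eq := integral_neg_self_eq_two_nsmul_of_even
    (fun s => by simp only [hγeven]; ring) hfourth
  have hrem := abs_integral_mul_le_of_abs_le hδ.le hquot (hfourth.mono_set h0δ)
    (fun s hs => mul_nonneg (by positivity) (hγpos s ⟨by linarith [hs.1], hs.2⟩))
  rw [hsplit, hsecond, hfourth_eq, two_nsmul, show ∀ c J : ℝ, -2 * (c * (1 / 2) + J) + c = -2 * J by intros; ring,
    abs_mul, abs_neg, abs_two]
  linarith

theorem stmt14 (a b δ M : ℝ) (hab : a < b) (hδ : 0 < δ)
    (u γ : ℝ → ℝ)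
    (hu : Function.Periodic u (b - a)) (huC4 : ContDiff ℝ 4 u)
    (hγeven : ∀ s, γ (-s) = γ s)
    (hγpos : ∀ s ∈ Set.Ioo (-δ) δ, 0 ≤ γ s)
    (hnorm : (∫ s in (-δ)..δ, s ^ 2 * γ s) = 1)
    (hfourth : IntervalIntegrable (fun s => s ^ 4 * γ s) volume (-δ) δ)
    (hM : ∀ y, |iteratedDeriv 4 u y| ≤ M) :
    ∀ x : ℝ,
      |(-2) * (∫ s in (0:ℝ)..δ, (u (x + s) - 2 * u x + u (x - s)) * γ s)
          + iteratedDeriv 2 u x|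
        ≤ (1 / 12) * M * ∫ s in (-δ)..δ, s ^ 4 * γ s :=
  stmt14_general δ M hδ u γ huC4 hγeven hγpos hnorm hfourth hM
end
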